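/- Given a chain map [·,·] : C ⊗ C → C on a 2-term complex C (concentrated in degrees −1, 0), defining the derived bracket [a,b] := [da,b] for a,b ∈ C^{-1} yields a bilinear functor on Γ(C) via [(x,a),(y,b)] = ([x,y], [x,b] + [a,y] + [a,b]); i.e. this formula respects source, target, identities, and composition. -/
import Mathlib


/-- A linear category (2-vector space): a category internal to vector spaces. -/
structure LinCat (k : Type*) [Field k] (V₀ V₁ : Type*)
    [AddCommGroup V₀] [Module k V₀] [AddCommGroup V₁] [Module k V₁] where
  s : V₁ →ₗ[k] V₀
  t : V₁ →ₗ[k] V₀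
  e : V₀ →ₗ[k] V₁
  comp : ∀ a b : V₁, s b = t a → V₁
  s_e : ∀ x, s (e x) = x
  t_e : ∀ x, t (e x) = x
  s_comp : ∀ a b h, s (comp a b h) = s a
  t_comp : ∀ a b h, t (comp a b h) = t b
  comp_add : ∀ a b a' b' (h : s b = t a) (h' : s b' = t a')
      (h'' : s (b + b') = t (a + a')),
      comp (a + a') (b + b') h'' = comp a b h + comp a' b' h'
  comp_smul : ∀ (c : k) a b (h : s b = t a) (h' : s (c • b) = t (c • a)),
      comp (c • a) (c • b) h' = c • comp a b h
  id_comp : ∀ (a : V₁) (h : s a = t (e (s a))), comp (e (s a)) a h = a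
  comp_id : ∀ (a : V₁) (h : s (e (t a)) = t a), comp a (e (t a)) h = a
  assoc : ∀ (a b c : V₁) (h₁ : s b = t a) (h₂ : s c = t b)
      (h₃ : s c = t (comp a b h₁)) (h₄ : s (comp b c h₂) = t a),
      comp (comp a b h₁) c h₃ = comp a (comp b c h₂) h₄

/-- The functor `Γ` from a 2-term complex `d : C⁻¹ → C⁰` to linear categories. -/
def Gamma (k : Type*) [Field k] {C0 Cm1 : Type*}
    [AddCommGroup C0] [Module k C0] [AddCommGroup Cm1] [Module k Cm1]
    (d : Cm1 →ₗ[k] C0) : LinCat k C0 (C0 × Cm1) where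
  s := LinearMap.fst k C0 Cm1
  t := LinearMap.fst k C0 Cm1 + d.comp (LinearMap.snd k C0 Cm1)
  e := LinearMap.inl k C0 Cm1
  comp := fun a b _ => (a.1, a.2 + b.2)
  s_e := fun _ => rfl
  t_e := fun x => by simp
  s_comp := fun _ _ _ => rfl
  t_comp := fun a b h => by
    simpa [map_add, add_assoc] using congrArg (· + d b.2) h.symm
  comp_add := fun a b a' b' _ _ _ => by ext <;> simp; abel
  comp_smul := fun c a b _ _ => by ext <;> simp
  id_comp := fun a _ => by simp
  comp_id := fun a _ => by simp
  assoc := fun a b c _ _ _ _ => by ext <;> simp [add_assoc]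

/-- A bilinear functor `[·,·] : V × V → V` on a linear category `V`. -/
structure BilinFunctor (k : Type*) [Field k] {V₀ V₁ : Type*}
    [AddCommGroup V₀] [Module k V₀] [AddCommGroup V₁] [Module k V₁]
    (L : LinCat k V₀ V₁) where
  obj : V₀ →ₗ[k] V₀ →ₗ[k] V₀
  arr : V₁ →ₗ[k] V₁ →ₗ[k] V₁
  map_s : ∀ a b, L.s (arr a b) = obj (L.s a) (L.s b)
  map_t : ∀ a b, L.t (arr a b) = obj (L.t a) (L.t b)
  map_e : ∀ x y, arr (L.e x) (L.e y) = L.e (obj x y)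
  map_comp : ∀ (a a' b b' : V₁) (h : L.s a' = L.t a) (h' : L.s b' = L.t b)
      (h'' : L.s (arr a' b') = L.t (arr a b)),
      arr (L.comp a a' h) (L.comp b b' h') = L.comp (arr a b) (arr a' b') h''

/-- Given a chain map `[·,·] : C ⊗ C → C` on a 2-term complex
(bilinear maps `l00 : C⁰×C⁰→C⁰`, `l0m : C⁰×C⁻¹→C⁻¹`, `lm0 : C⁻¹×C⁰→C⁻¹`
with `d[x,b] = [x,db]`, `d[a,y] = [da,y]` and `[da,b] = [a,db]`), the formula
`[(x,a),(y,b)] = ([x,y], [x,b] + [a,y] + [da,b])` (derived bracket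
`[a,b] := [da,b]`) defines a bilinear functor on `Γ(C)`: it respects source,
target, identities and composition. -/
theorem derivedBracket_bilinFunctor (k : Type*) [Field k] {C0 Cm1 : Type*}
    [AddCommGroup C0] [Module k C0] [AddCommGroup Cm1] [Module k Cm1]
    (d : Cm1 →ₗ[k] C0)
    (l00 : C0 →ₗ[k] C0 →ₗ[k] C0)
    (l0m : C0 →ₗ[k] Cm1 →ₗ[k] Cm1)
    (lm0 : Cm1 →ₗ[k] C0 →ₗ[k] Cm1)
    (chain1 : ∀ x b, d (l0m x b) = l00 x (d b))
    (chain2 : ∀ a y, d (lm0 a y) = l00 (d a) y)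
    (chain3 : ∀ a b, l0m (d a) b = lm0 a (d b)) :
    ∃ B : BilinFunctor k (Gamma k d),
      (∀ x y : C0, B.obj x y = l00 x y) ∧
      (∀ (p q : C0 × Cm1),
        B.arr p q = (l00 p.1 q.1, l0m p.1 q.2 + lm0 p.2 q.1 + l0m (d p.2) q.2)) := by
  refine ⟨{ obj := l00
            arr := LinearMap.mk₂ k
              (fun p q => (l00 p.1 q.1, l0m p.1 q.2 + lm0 p.2 q.1 + l0m (d p.2) q.2))
              (fun p p' q => by ext <;> simp <;> abel)
              (fun c p q => by ext <;> simp)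
              (fun p q q' => by ext <;> simp <;> abel)
              (fun c p q => by ext <;> simp)
            map_s := fun a b => rfl
            map_t := fun a b => by
              simp [Gamma, chain1, chain2, map_add]
              abel
            map_e := fun x y => by
              simp [Gamma]
            map_comp := ?_ }, fun x y => rfl, fun p q => rfl⟩
  intro a a' b b' h h' h''
  simp only [Gamma, LinearMap.mk₂_apply, LinearMap.add_apply, LinearMap.coe_comp,
    Function.comp_apply, LinearMap.fst_apply, LinearMap.snd_apply] at h h' ⊢
  ext
  · simp [h, h']
  · simp [h, h', chain3, map_add]
    abel
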